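/- arXiv:2502.14812 — 2 statements merged into one kernel-verified Lean document; each statement's English description precedes it below -/
import Mathlib

section
/- For ℓ = 1, the maximum of val(p) over p ∈ Δ([n]) equals max_{t+1 ≤ i ≤ n} (i − t)/(Σ_{j=1}^{i} 1/v_j). In particular, there is an optimal distribution p with v_1 p_1 = ⋯ = v_i p_i and p_{i+1} = ⋯ = p_n = 0 for some i ≥ t + 1. -/
open Finset

noncomputable def val (n t : ℕ) (v p : Fin n → ℝ) : ℝ :=
  sInf {x : ℝ | ∃ B : Finset (Fin n), B.card = t ∧ x = ∑ i ∈ univ \ B, v i * p i}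

private lemma abel_aux (a e : ℕ → ℝ) (ha : ∀ k, a (k + 1) ≤ a k)
    (N : ℕ) (hE : ∀ m ≤ N, 0 ≤ ∑ k ∈ Finset.range m, e k) :
    a N * ∑ k ∈ Finset.range N, e k ≤ ∑ k ∈ Finset.range N, a k * e k := by
  induction N with
  | zero => simp
  | succ N ih =>
    have h1 := ih (fun m hm => hE m (le_trans hm (Nat.le_succ N)))
    have h2 : 0 ≤ ∑ k ∈ Finset.range N, e k + e N := by
      rw [← Finset.sum_range_succ]; exact hE _ le_rfl
    rw [Finset.sum_range_succ, Finset.sum_range_succ]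
    have h3 := mul_le_mul_of_nonneg_right (ha N) h2
    nlinarith [h1, h3]

private lemma abel_le (a c d : ℕ → ℝ) (ha : ∀ k, a (k + 1) ≤ a k) (ha0 : ∀ k, 0 ≤ a k)
    (N : ℕ) (h : ∀ m ≤ N, ∑ k ∈ Finset.range m, c k ≤ ∑ k ∈ Finset.range m, d k) :
    ∑ k ∈ Finset.range N, a k * c k ≤ ∑ k ∈ Finset.range N, a k * d k := by
  have hE : ∀ m ≤ N, 0 ≤ ∑ k ∈ Finset.range m, (d k - c k) := by
    intro m hm
    rw [Finset.sum_sub_distrib]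
    linarith [h m hm]
  have key := abel_aux a (fun k => d k - c k) ha N hE
  have h1 : 0 ≤ a N * ∑ k ∈ Finset.range N, (d k - c k) :=
    mul_nonneg (ha0 N) (hE N le_rfl)
  have h2 : ∑ k ∈ Finset.range N, a k * (d k - c k)
      = ∑ k ∈ Finset.range N, a k * d k - ∑ k ∈ Finset.range N, a k * c k := by
    rw [← Finset.sum_sub_distrib]; exact Finset.sum_congr rfl fun _ _ => by ring
  have h3 := h1.trans key
  rw [h2] at h3
  linarith

private lemma sum_filter_lt {n : ℕ} (f : Fin n → ℝ) (F : ℕ → ℝ)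
    (hF : ∀ (k : ℕ) (h : k < n), F k = f ⟨k, h⟩) (i : ℕ) (hi : i ≤ n) :
    ∑ j ∈ univ.filter (fun j : Fin n => (j : ℕ) < i), f j = ∑ k ∈ Finset.range i, F k := by
  have h3 : (Finset.range n).filter (fun k => k < i) = Finset.range i := by
    ext k; simp only [Finset.mem_filter, Finset.mem_range]; omega
  calc ∑ j ∈ univ.filter (fun j : Fin n => (j : ℕ) < i), f j
      = ∑ j : Fin n, (if (j : ℕ) < i then F (j : ℕ) else 0) := by
        rw [Finset.sum_filter]
        refine Finset.sum_congr rfl fun j _ => ?_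
        by_cases hj : (j : ℕ) < i
        · rw [if_pos hj, if_pos hj, hF (j : ℕ) j.isLt]
        · rw [if_neg hj, if_neg hj]
    _ = ∑ k ∈ Finset.range n, (if k < i then F k else 0) :=
        Fin.sum_univ_eq_sum_range (fun k => if k < i then F k else 0) n
    _ = ∑ k ∈ (Finset.range n).filter (fun k => k < i), F k := (Finset.sum_filter _ _).symm
    _ = ∑ k ∈ Finset.range i, F k := by rw [h3]

private lemma card_filter_Ico (n a b : ℕ) (hb : b ≤ n) :
    (univ.filter (fun k : Fin n => a ≤ (k : ℕ) ∧ (k : ℕ) < b)).card = b - a := by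
  have h3 : (Finset.range n).filter (fun k => a ≤ k ∧ k < b) = Finset.Ico a b := by
    ext k; simp only [Finset.mem_filter, Finset.mem_range, Finset.mem_Ico]; omega
  calc (univ.filter (fun k : Fin n => a ≤ (k : ℕ) ∧ (k : ℕ) < b)).card
      = ∑ j : Fin n, if a ≤ (j : ℕ) ∧ (j : ℕ) < b then 1 else 0 := Finset.card_filter _ _
    _ = ∑ k ∈ Finset.range n, (if a ≤ k ∧ k < b then 1 else 0) :=
        Fin.sum_univ_eq_sum_range (fun k => if a ≤ k ∧ k < b then 1 else 0) n
    _ = ((Finset.range n).filter (fun k => a ≤ k ∧ k < b)).card := (Finset.card_filter _ _).symm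
    _ = (Finset.Ico a b).card := by rw [h3]
    _ = b - a := Nat.card_Ico a b

private lemma card_filter_lt' (n b : ℕ) (hb : b ≤ n) :
    (univ.filter (fun k : Fin n => (k : ℕ) < b)).card = b := by
  have h := card_filter_Ico n 0 b hb
  simpa using h

/-- For `ℓ = 1`, the maximum of `val p` over distributions `p` equals
`max_{t+1 ≤ i ≤ n} (i − t)/(∑_{j=1}^{i} 1/v j)`, and it is attained by a
distribution with `v 1 p 1 = ⋯ = v i p i` and `p (i+1) = ⋯ = p n = 0` for
some `i ≥ t + 1`. -/
theorem stmt_7 (n t : ℕ) (v : Fin n → ℝ)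
    (hmono : ∀ a b : Fin n, a ≤ b → v b ≤ v a) (hpos : ∀ a, 0 < v a)
    (ht : t < n) :
    let M : ℝ := sSup {x : ℝ | ∃ i : ℕ, t + 1 ≤ i ∧ i ≤ n ∧
      x = ((i : ℝ) - t) / (∑ j ∈ univ.filter (fun j : Fin n => (j : ℕ) < i), 1 / v j)}
    (∀ p : Fin n → ℝ, (∀ i, 0 ≤ p i) → (∑ i, p i) = 1 → val n t v p ≤ M) ∧
    (∃ p : Fin n → ℝ, (∀ i, 0 ≤ p i) ∧ (∑ i, p i) = 1 ∧ val n t v p = M ∧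
      ∃ i : ℕ, t + 1 ≤ i ∧ i ≤ n ∧
        (∀ k l : Fin n, (k : ℕ) < i → (l : ℕ) < i → v k * p k = v l * p l) ∧
        (∀ k : Fin n, i ≤ (k : ℕ) → p k = 0)) := by
  intro M
  have hM : M = sSup {x : ℝ | ∃ i : ℕ, t + 1 ≤ i ∧ i ≤ n ∧
      x = ((i : ℝ) - t) / (∑ j ∈ univ.filter (fun j : Fin n => (j : ℕ) < i), 1 / v j)} := rfl
  set G : ℕ → ℝ := fun i =>
    ((i : ℝ) - t) / (∑ j ∈ univ.filter (fun j : Fin n => (j : ℕ) < i), 1 / v j) with hG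
  set W : ℕ → ℝ := fun k => if h : k < n then 1 / v ⟨k, h⟩ else 1 with hWdef
  set S : ℕ → ℝ := fun i => ∑ k ∈ Finset.range i, W k with hSdef
  have hWpos : ∀ k, 0 < W k := by
    intro k
    simp only [hWdef]
    split
    · exact one_div_pos.mpr (hpos _)
    · norm_num
  have hS : ∀ i ≤ n, (∑ j ∈ univ.filter (fun j : Fin n => (j : ℕ) < i), 1 / v j) = S i := by
    intro i hi
    exact sum_filter_lt (fun j => 1 / v j) W
      (fun k h => by simp only [hWdef]; rw [dif_pos h]) i hi
  have hSpos : ∀ i, 0 < i → 0 < S i := by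
    intro i hi
    exact Finset.sum_pos (fun k _ => hWpos k) (by simpa [Finset.nonempty_range_iff] using hi.ne')
  have hSnonneg : ∀ i, 0 ≤ S i := fun i => Finset.sum_nonneg fun k _ => (hWpos k).le
  have hGS : ∀ i ≤ n, G i = ((i : ℝ) - t) / S i := by
    intro i hi; rw [hG]; simp only; rw [hS i hi]
  have hfin : ({x : ℝ | ∃ i : ℕ, t + 1 ≤ i ∧ i ≤ n ∧
      x = ((i : ℝ) - t) / (∑ j ∈ univ.filter (fun j : Fin n => (j : ℕ) < i), 1 / v j)}).Finite := by
    have hset : {x : ℝ | ∃ i : ℕ, t + 1 ≤ i ∧ i ≤ n ∧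
        x = ((i : ℝ) - t) / (∑ j ∈ univ.filter (fun j : Fin n => (j : ℕ) < i), 1 / v j)}
        = G '' (Set.Icc (t + 1) n) := by
      ext x
      constructor
      · rintro ⟨i, h1, h2, h3⟩
        exact ⟨i, ⟨h1, h2⟩, h3.symm⟩
      · rintro ⟨i, ⟨h1, h2⟩, h3⟩
        exact ⟨i, h1, h2, h3.symm⟩
    rw [hset]; exact (Set.finite_Icc _ _).image _
  have hne : ({x : ℝ | ∃ i : ℕ, t + 1 ≤ i ∧ i ≤ n ∧
      x = ((i : ℝ) - t) / (∑ j ∈ univ.filter (fun j : Fin n => (j : ℕ) < i), 1 / v j)}).Nonempty :=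
    ⟨G n, n, ht, le_rfl, rfl⟩
  have hbdd := hfin.bddAbove
  have hle : ∀ i, t + 1 ≤ i → i ≤ n → G i ≤ M := by
    intro i h1 h2
    rw [hM]
    exact le_csSup hbdd ⟨i, h1, h2, rfl⟩
  have hMpos : 0 < M := by
    have h1 : G (t + 1) ≤ M := hle (t + 1) le_rfl ht
    have h2 : 0 < G (t + 1) := by
      rw [hGS (t + 1) ht]
      apply div_pos
      · push_cast; linarith
      · exact hSpos _ (Nat.succ_pos t)
    linarith
  have hkey : ∀ m ≤ n, t < m → ((m : ℝ) - t) ≤ M * S m := by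
    intro m hm htm
    have h1 : G m ≤ M := hle m htm hm
    rw [hGS m hm] at h1
    have h2 := hSpos m (lt_of_le_of_lt (Nat.zero_le t) htm)
    calc ((m : ℝ) - t) = (((m : ℝ) - t) / S m) * S m := by field_simp
      _ ≤ M * S m := mul_le_mul_of_nonneg_right h1 h2.le
  have hvbdd : ∀ p : Fin n → ℝ, BddBelow
      {x : ℝ | ∃ B : Finset (Fin n), B.card = t ∧ x = ∑ i ∈ univ \ B, v i * p i} := by
    intro p
    have hvalset : {x : ℝ | ∃ B : Finset (Fin n), B.card = t ∧ x = ∑ i ∈ univ \ B, v i * p i}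
        = (fun B : Finset (Fin n) => ∑ i ∈ univ \ B, v i * p i) '' {B | B.card = t} := by
      ext x
      constructor
      · rintro ⟨B, h1, h2⟩; exact ⟨B, h1, h2.symm⟩
      · rintro ⟨B, h1, h2⟩; exact ⟨B, h1, h2.symm⟩
    rw [hvalset]
    exact ((Set.toFinite _).image _).bddBelow
  constructor
  · -- upper bound for every distribution p
    intro p hp hsum
    set q : Fin n → ℝ := fun j => v j * p j with hq
    have hq0 : ∀ j, 0 ≤ q j := fun j => mul_nonneg (hpos j).le (hp j)
    set e : Equiv.Perm (Fin n) := (Fin.revPerm).trans (Tuple.sort q) with he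
    set α : Fin n → ℝ := fun k => q (e k) with hα
    have hα_anti : Antitone α := by
      intro a b hab
      have h1 : Fin.rev b ≤ Fin.rev a := Fin.rev_le_rev.mpr hab
      have h2 := Tuple.monotone_sort q h1
      simpa [hα, he, Fin.revPerm] using h2
    have hα0 : ∀ k, 0 ≤ α k := fun k => hq0 _
    set B₁ : Finset (Fin n) := (univ.filter (fun k : Fin n => (k : ℕ) < t)).image e with hB₁
    have hB₁card : B₁.card = t := by
      rw [hB₁, Finset.card_image_of_injective _ e.injective]
      exact card_filter_lt' n t ht.le
    have hV1 : val n t v p ≤ ∑ j ∈ univ \ B₁, q j := by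
      unfold _root_.val
      exact csInf_le (hvbdd p) ⟨B₁, hB₁card, rfl⟩
    have hsdiff : ∑ j ∈ univ \ B₁, q j
        = ∑ k ∈ univ.filter (fun k : Fin n => ¬ (k : ℕ) < t), α k := by
      rw [Finset.sum_sdiff_eq_sub (Finset.subset_univ B₁)]
      rw [hB₁, Finset.sum_image (fun x _ y _ h => e.injective h)]
      have htot : ∑ j : Fin n, q j = ∑ k : Fin n, α k := (Equiv.sum_comp e q).symm
      have hsplit := Finset.sum_filter_add_sum_filter_not univ
        (fun k : Fin n => (k : ℕ) < t) α
      have hre : ∑ x ∈ univ.filter (fun k : Fin n => (k : ℕ) < t), q (e x)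
          = ∑ x ∈ univ.filter (fun k : Fin n => (k : ℕ) < t), α x := rfl
      rw [hre, htot]
      linarith
    set w : Fin n → ℝ := fun j => 1 / v j with hwdef
    have hwmono : Monotone w := fun a b hab =>
      one_div_le_one_div_of_le (hpos b) (hmono a b hab)
    have hrear : ∑ k, α k * w k ≤ 1 := by
      have h1 : ∑ k, α k * w k ≤ ∑ k, α k * w (e k) :=
        (hα_anti.antivary hwmono).sum_mul_le_sum_mul_comp_perm
      have h2 : ∑ k, α k * w (e k) = ∑ j, q j * w j := Equiv.sum_comp e (fun j => q j * w j)
      have h3 : ∑ j, q j * w j = ∑ j, p j := by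
        refine Finset.sum_congr rfl fun j _ => ?_
        rw [hq, hwdef]
        simp only
        rw [mul_one_div]
        exact mul_div_cancel_left₀ _ (hpos j).ne'
      rw [h2, h3, hsum] at h1
      exact h1
    set A : ℕ → ℝ := fun k => if h : k < n then α ⟨k, h⟩ else 0 with hAdef
    have hA_anti : ∀ k, A (k + 1) ≤ A k := by
      intro k
      by_cases h1 : k + 1 < n
      · have h2 : k < n := by omega
        simp only [hAdef, dif_pos h1, dif_pos h2]
        exact hα_anti (Fin.mk_le_mk.mpr (Nat.le_succ k))
      · by_cases h2 : k < n
        · simp only [hAdef, dif_neg h1, dif_pos h2]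
          exact hα0 _
        · simp only [hAdef, dif_neg h1, dif_neg h2]
          exact le_rfl
    have hA0 : ∀ k, 0 ≤ A k := by
      intro k
      simp only [hAdef]
      split
      · exact hα0 _
      · exact le_rfl
    set C : ℕ → ℝ := fun k => if t ≤ k then 1 else 0 with hCdef
    set D : ℕ → ℝ := fun k => M * W k with hDdef
    have hprefix : ∀ m ≤ n, ∑ k ∈ Finset.range m, C k ≤ ∑ k ∈ Finset.range m, D k := by
      intro m hm
      have hfil : (Finset.range m).filter (fun k => t ≤ k) = Finset.Ico t m := by
        ext k; simp only [Finset.mem_filter, Finset.mem_range, Finset.mem_Ico]; omega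
      have hCsum : ∑ k ∈ Finset.range m, C k = ((m - t : ℕ) : ℝ) := by
        calc ∑ k ∈ Finset.range m, C k
            = ∑ k ∈ Finset.range m, (if t ≤ k then (1 : ℝ) else 0) := rfl
          _ = (((Finset.range m).filter (fun k => t ≤ k)).card : ℝ) := Finset.sum_boole _ _
          _ = ((m - t : ℕ) : ℝ) := by rw [hfil, Nat.card_Ico]
      have hDsum : ∑ k ∈ Finset.range m, D k = M * S m := by
        calc ∑ k ∈ Finset.range m, D k
            = ∑ k ∈ Finset.range m, M * W k := rfl
          _ = M * ∑ k ∈ Finset.range m, W k := (Finset.mul_sum _ _ _).symm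
          _ = M * S m := rfl
      rw [hCsum, hDsum]
      by_cases htm : t < m
      · have hc : ((m - t : ℕ) : ℝ) = (m : ℝ) - t := by
          rw [Nat.cast_sub htm.le]
        rw [hc]
        exact hkey m hm htm
      · have hz : m - t = 0 := by omega
        rw [hz]
        calc ((0 : ℕ) : ℝ) = 0 := by norm_num
          _ ≤ M * S m := mul_nonneg hMpos.le (hSnonneg m)
    have habel := abel_le A C D hA_anti hA0 n hprefix
    have hL : ∑ k ∈ Finset.range n, A k * C k
        = ∑ k ∈ univ.filter (fun k : Fin n => ¬ (k : ℕ) < t), α k := by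
      calc ∑ k ∈ Finset.range n, A k * C k
          = ∑ j : Fin n, A (j : ℕ) * C (j : ℕ) := (Fin.sum_univ_eq_sum_range _ n).symm
        _ = ∑ j : Fin n, (if ¬ (j : ℕ) < t then α j else 0) := by
            refine Finset.sum_congr rfl fun j _ => ?_
            simp only [hAdef, hCdef, dif_pos j.isLt, Fin.eta]
            by_cases hj : t ≤ (j : ℕ)
            · rw [if_pos hj, if_pos (not_lt.mpr hj), mul_one]
            · rw [if_neg hj, if_neg (not_not_intro (not_le.mp hj)), mul_zero]
        _ = ∑ k ∈ univ.filter (fun k : Fin n => ¬ (k : ℕ) < t), α k :=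
            (Finset.sum_filter _ _).symm
    have hR : ∑ k ∈ Finset.range n, A k * D k = M * ∑ k, α k * w k := by
      calc ∑ k ∈ Finset.range n, A k * D k
          = ∑ j : Fin n, A (j : ℕ) * D (j : ℕ) := (Fin.sum_univ_eq_sum_range _ n).symm
        _ = ∑ j : Fin n, M * (α j * w j) := by
            refine Finset.sum_congr rfl fun j _ => ?_
            simp only [hAdef, hDdef, hWdef, hwdef, dif_pos j.isLt, Fin.eta]
            ring
        _ = M * ∑ k, α k * w k := (Finset.mul_sum _ _ _).symm
    calc val n t v p ≤ ∑ j ∈ univ \ B₁, q j := hV1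
      _ = ∑ k ∈ univ.filter (fun k : Fin n => ¬ (k : ℕ) < t), α k := hsdiff
      _ = ∑ k ∈ Finset.range n, A k * C k := hL.symm
      _ ≤ ∑ k ∈ Finset.range n, A k * D k := habel
      _ = M * ∑ k, α k * w k := hR
      _ ≤ M * 1 := mul_le_mul_of_nonneg_left hrear hMpos.le
      _ = M := mul_one M
  · -- existence of an optimal distribution
    have hmem : M ∈ {x : ℝ | ∃ i : ℕ, t + 1 ≤ i ∧ i ≤ n ∧
        x = ((i : ℝ) - t) / (∑ j ∈ univ.filter (fun j : Fin n => (j : ℕ) < i), 1 / v j)} := by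
      rw [hM]
      exact hne.csSup_mem hfin
    obtain ⟨i, hi1, hi2, hMeq⟩ := hmem
    have hMG : M = ((i : ℝ) - t) / S i := by rw [hMeq, hS i hi2]
    have hSipos : 0 < S i := hSpos i (by omega)
    set c₀ : ℝ := 1 / S i with hc₀
    have hc₀pos : 0 < c₀ := by rw [hc₀]; exact one_div_pos.mpr hSipos
    set p : Fin n → ℝ := fun j => if (j : ℕ) < i then c₀ / v j else 0 with hpdef
    have hp0 : ∀ j, 0 ≤ p j := by
      intro j
      simp only [hpdef]
      split
      · exact div_nonneg hc₀pos.le (hpos j).le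
      · exact le_rfl
    have hq : ∀ j : Fin n, v j * p j = if (j : ℕ) < i then c₀ else 0 := by
      intro j
      simp only [hpdef]
      split
      · rw [mul_comm, div_mul_cancel₀ _ (hpos j).ne']
      · rw [mul_zero]
    have hpsum : ∑ j, p j = 1 := by
      have h1 : ∑ j, p j = ∑ j ∈ univ.filter (fun j : Fin n => (j : ℕ) < i), c₀ / v j := by
        simp only [hpdef]
        rw [Finset.sum_filter]
      have h2 : ∑ j ∈ univ.filter (fun j : Fin n => (j : ℕ) < i), c₀ / v j
          = c₀ * ∑ j ∈ univ.filter (fun j : Fin n => (j : ℕ) < i), 1 / v j := by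
        rw [Finset.mul_sum]
        exact Finset.sum_congr rfl fun j _ => by rw [div_eq_mul_one_div]
      rw [h1, h2, hS i hi2, hc₀]
      field_simp
    set x₀ : ℝ := ((i : ℝ) - t) * c₀ with hx₀
    have hcard_i : (univ.filter (fun k : Fin n => (k : ℕ) < i)).card = i := card_filter_lt' n i hi2
    have hlb : ∀ B : Finset (Fin n), B.card = t → x₀ ≤ ∑ j ∈ univ \ B, v j * p j := by
      intro B hB
      have h1 : ∑ j ∈ univ \ B, v j * p j
          = ∑ j ∈ (univ \ B).filter (fun k : Fin n => (k : ℕ) < i), c₀ := by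
        rw [Finset.sum_filter]
        exact Finset.sum_congr rfl fun j _ => hq j
      have hsub : (univ.filter (fun k : Fin n => (k : ℕ) < i)) \ B
          ⊆ (univ \ B).filter (fun k : Fin n => (k : ℕ) < i) := by
        intro j hj
        simp only [Finset.mem_sdiff, Finset.mem_filter, Finset.mem_univ, true_and] at hj ⊢
        exact ⟨hj.2, hj.1⟩
      have hc1 : i - t ≤ ((univ \ B).filter (fun k : Fin n => (k : ℕ) < i)).card := by
        calc i - t = (univ.filter (fun k : Fin n => (k : ℕ) < i)).card - B.card := by
              rw [hcard_i, hB]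
          _ ≤ ((univ.filter (fun k : Fin n => (k : ℕ) < i)) \ B).card :=
              Finset.le_card_sdiff B _
          _ ≤ _ := Finset.card_le_card hsub
      have hc2 : ((i : ℝ) - t)
          ≤ (((univ \ B).filter (fun k : Fin n => (k : ℕ) < i)).card : ℝ) := by
        have h4 := (Nat.cast_le (α := ℝ)).mpr hc1
        rw [Nat.cast_sub (by omega : t ≤ i)] at h4
        exact h4
      calc x₀ = ((i : ℝ) - t) * c₀ := rfl
        _ ≤ (((univ \ B).filter (fun k : Fin n => (k : ℕ) < i)).card : ℝ) * c₀ :=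
            mul_le_mul_of_nonneg_right hc2 hc₀pos.le
        _ = ∑ j ∈ (univ \ B).filter (fun k : Fin n => (k : ℕ) < i), c₀ := by
            rw [Finset.sum_const, nsmul_eq_mul]
        _ = ∑ j ∈ univ \ B, v j * p j := h1.symm
    set B₀ : Finset (Fin n) := univ.filter (fun k : Fin n => (k : ℕ) < t) with hB₀
    have hB₀card : B₀.card = t := card_filter_lt' n t ht.le
    have hub : ∑ j ∈ univ \ B₀, v j * p j = x₀ := by
      have h1 : ∑ j ∈ univ \ B₀, v j * p j
          = ∑ j ∈ (univ \ B₀).filter (fun k : Fin n => (k : ℕ) < i), c₀ := by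
        rw [Finset.sum_filter]
        exact Finset.sum_congr rfl fun j _ => hq j
      have h2 : (univ \ B₀).filter (fun k : Fin n => (k : ℕ) < i)
          = univ.filter (fun k : Fin n => t ≤ (k : ℕ) ∧ (k : ℕ) < i) := by
        rw [hB₀]
        ext j
        simp only [Finset.mem_filter, Finset.mem_sdiff, Finset.mem_univ, true_and]
        omega
      rw [h1, h2, Finset.sum_const, card_filter_Ico n t i hi2, nsmul_eq_mul, hx₀,
        Nat.cast_sub (by omega : t ≤ i)]
    have hval : val n t v p = M := by
      have hle1 : val n t v p ≤ x₀ := by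
        unfold _root_.val
        exact csInf_le (hvbdd p) ⟨B₀, hB₀card, hub.symm⟩
      have hge1 : x₀ ≤ val n t v p := by
        unfold _root_.val
        refine le_csInf ⟨∑ j ∈ univ \ B₀, v j * p j, ⟨B₀, hB₀card, rfl⟩⟩ ?_
        rintro x ⟨B, hB, rfl⟩
        exact hlb B hB
      have hx : val n t v p = x₀ := le_antisymm hle1 hge1
      rw [hx, hx₀, hMG, hc₀]
      ring
    refine ⟨p, hp0, hpsum, hval, i, hi1, hi2, ?_, ?_⟩
    · intro k l hk hl
      rw [hq k, hq l, if_pos hk, if_pos hl]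
    · intro k hk
      simp only [hpdef]
      rw [if_neg (by omega)]
end

section
/- There exists a pseudo-distribution p ∈ Δ_{≤ℓ}([n]) maximizing val(p) satisfying v_1 p_1 = v_2 p_2 = ⋯ = v_{t+1} p_{t+1} ≥ v_{t+2} p_{t+2} ≥ ⋯ ≥ v_n p_n. -/
open Finset

/-!
Compactness gives a maximizer `q`. Sort the products `v i * q i` decreasingly into `w`; then
`val q` is the sum of `w` over the indices `≥ t`. Truncating `w` at its `(t+1)`-st value `w t`
and dividing by `v` gives `p` with the same value and the required shape. It is feasible because
`w i ≤ v i` (pigeonhole, `v` being decreasing), and `∑ w i / v i ≤ ∑ q i` by the rearrangement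
inequality, `w` being decreasing and `1 / v` increasing.
-/

theorem Finset.sum_le_sum_of_card_eq_of_sdiff_le {ι M : Type*} [DecidableEq ι] [AddCommGroup M]
    [LinearOrder M] [IsOrderedAddMonoid M] {s u : Finset ι} {f : ι → M} (c : M)
    (hcard : s.card = u.card) (hs : ∀ i ∈ s \ u, f i ≤ c) (hu : ∀ j ∈ u \ s, c ≤ f j) :
    ∑ i ∈ s, f i ≤ ∑ i ∈ u, f i := by
  have hle : ∑ i ∈ s \ u, f i ≤ ∑ i ∈ u \ s, f i :=
    calc ∑ i ∈ s \ u, f i ≤ (s \ u).card • c := sum_le_card_nsmul _ _ _ hs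
      _ = (u \ s).card • c := by rw [card_sdiff_comm hcard]
      _ ≤ ∑ i ∈ u \ s, f i := card_nsmul_le_sum _ _ _ hu
  rw [← sub_nonneg, ← sum_sdiff_sub_sum_sdiff]
  exact sub_nonneg.2 hle

theorem Finset.sum_compl_comp_perm {ι M : Type*} [Fintype ι] [DecidableEq ι] [AddCommMonoid M]
    (σ : Equiv.Perm ι) (f : ι → M) (B : Finset ι) :
    ∑ i ∈ univ \ B, f (σ i) = ∑ i ∈ univ \ B.map σ.toEmbedding, f i := by
  conv_rhs => rw [← map_univ_equiv σ, ← Finset.map_sdiff, sum_map]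
  rfl

section Sorting

variable {n : ℕ}

theorem Tuple.exists_perm_antitone_comp {α : Type*} [LinearOrder α] (y : Fin n → α) :
    ∃ σ : Equiv.Perm (Fin n), Antitone (y ∘ σ) :=
  ⟨Tuple.sort (OrderDual.toDual ∘ y), monotone_toDual_comp_iff.1 (Tuple.monotone_sort _)⟩

/-- If `y (σ i) > v i`, then `σ` would map the `i + 1` indices `≤ i` into the `i` indices
`< i`. -/
theorem comp_perm_le_of_le_of_antitone {α : Type*} [LinearOrder α] {v y : Fin n → α}
    {σ : Equiv.Perm (Fin n)} (hv : Antitone v) (hyv : ∀ i, y i ≤ v i) (hσ : Antitone (y ∘ σ))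
    (i : Fin n) : y (σ i) ≤ v i := by
  by_contra! hlt
  have hmaps : ∀ k ∈ Iic i, σ k ∈ Iio i := fun k hk => by
    have : v i < v (σ k) := hlt.trans_le ((hσ (mem_Iic.1 hk)).trans (hyv (σ k)))
    exact mem_Iio.2 (hv.reflect_lt this)
  have := card_le_card_of_injOn σ hmaps σ.injective.injOn
  simp at this

theorem sum_comp_perm_div_le_of_antitone {v y : Fin n → ℝ} {σ : Equiv.Perm (Fin n)}
    (hv : Antitone v) (hpos : ∀ i, 0 < v i) (hσ : Antitone (y ∘ σ)) :
    ∑ i, y (σ i) / v i ≤ ∑ i, y i / v i := by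
  have hinv : Monotone fun i => (v i)⁻¹ := fun i j hij => inv_anti₀ (hpos j) (hv hij)
  simpa [div_eq_mul_inv] using (hσ.antivary hinv).sum_smul_le_sum_comp_perm_smul (σ := σ.symm)

end Sorting

section Val

variable {n t : ℕ}

theorem val_eq_inf' (ht : t ≤ n) (v p : Fin n → ℝ) :
    val n t v p = (powersetCard t univ).inf' (powersetCard_nonempty.2 (by simpa using ht))
      (fun B => ∑ i ∈ univ \ B, v i * p i) := by
  rw [inf'_eq_csInf_image, _root_.val]
  congr 1
  ext x
  simp [mem_powersetCard, eq_comm]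

theorem continuous_val (ht : t ≤ n) (v : Fin n → ℝ) : Continuous (val n t v) := by
  simp_rw [funext (val_eq_inf' ht v)]
  exact Continuous.finset_inf'_apply _ fun B _ => by fun_prop

theorem val_comp_perm (σ : Equiv.Perm (Fin n)) (v p : Fin n → ℝ) :
    val n t (v ∘ σ) (p ∘ σ) = val n t v p := by
  unfold _root_.val
  congr 1
  ext x
  constructor
  · rintro ⟨B, rfl, rfl⟩
    exact ⟨B.map σ.toEmbedding, card_map _, sum_compl_comp_perm σ (fun i => v i * p i) B⟩
  · rintro ⟨B, rfl, rfl⟩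
    refine ⟨B.map σ.symm.toEmbedding, card_map _, ?_⟩
    have := sum_compl_comp_perm σ (fun i => v i * p i) (B.map σ.symm.toEmbedding)
    rw [map_map] at this
    simpa using this.symm

theorem val_eq_sum_Ici_of_antitone {v p : Fin n → ℝ} (ht : t < n)
    (hvp : Antitone fun i => v i * p i) :
    val n t v p = ∑ i ∈ Ici (⟨t, ht⟩ : Fin n), v i * p i := by
  set b : Fin n := ⟨t, ht⟩
  have hcard : (Iio b).card = t := by simp [b]
  have hIci : Ici b = univ \ Iio b := by ext; simp
  rw [val_eq_inf' ht.le, hIci]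
  refine le_antisymm (inf'_le _ (by simp [mem_powersetCard, hcard])) (le_inf' _ _ fun B hB => ?_)
  rw [mem_powersetCard] at hB
  have hsum : ∑ i ∈ B, v i * p i ≤ ∑ i ∈ Iio b, v i * p i :=
    sum_le_sum_of_card_eq_of_sdiff_le (v b * p b) (hB.2.trans hcard.symm)
      (fun i hi => hvp (by simpa using (mem_sdiff.1 hi).2))
      (fun j hj => hvp (mem_Iio.1 (mem_sdiff.1 hj).1).le)
  rw [sum_sdiff_eq_sub (subset_univ _), sum_sdiff_eq_sub (subset_univ _)]
  linarith

end Val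

def pseudoDistributions (ι : Type*) [Fintype ι] (ℓ : ℝ) : Set (ι → ℝ) :=
  {q | (∀ i, 0 ≤ q i ∧ q i ≤ 1) ∧ ∑ i, q i ≤ ℓ}

section PseudoDistributions

variable {ℓ : ℝ}

theorem isCompact_pseudoDistributions {ι : Type*} [Fintype ι] :
    IsCompact (pseudoDistributions ι ℓ) := by
  have : pseudoDistributions ι ℓ = Set.Icc 0 1 ∩ {q | ∑ i, q i ≤ ℓ} := by
    ext q
    simp [pseudoDistributions, Pi.le_def, forall_and]
  rw [this]
  exact isCompact_Icc.inter_right (isClosed_le (by fun_prop) continuous_const)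

theorem zero_mem_pseudoDistributions {ι : Type*} [Fintype ι] (hℓ : 0 ≤ ℓ) :
    0 ∈ pseudoDistributions ι ℓ :=
  ⟨fun _ => ⟨le_rfl, zero_le_one⟩, by simpa using hℓ⟩

theorem exists_flat_val_eq {n t : ℕ} {v q : Fin n → ℝ} (ht : t < n) (hv : Antitone v)
    (hpos : ∀ i, 0 < v i) (hq : q ∈ pseudoDistributions (Fin n) ℓ) :
    ∃ p ∈ pseudoDistributions (Fin n) ℓ, val n t v p = val n t v q ∧
      (∀ k l : Fin n, (k : ℕ) ≤ t → (l : ℕ) ≤ t → v k * p k = v l * p l) ∧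
      Antitone fun i => v i * p i := by
  obtain ⟨σ, hσ⟩ := Tuple.exists_perm_antitone_comp fun i => v i * q i
  set b : Fin n := ⟨t, ht⟩
  set w : Fin n → ℝ := fun i => v (σ i) * q (σ i)
  have hw_anti : Antitone w := hσ
  have hw_nonneg (i : Fin n) : 0 ≤ w i := mul_nonneg (hpos _).le (hq.1 _).1
  have hw_le (i : Fin n) : w i ≤ v i :=
    comp_perm_le_of_le_of_antitone hv (fun j => mul_le_of_le_one_right (hpos j).le (hq.1 j).2) hσ i
  set p : Fin n → ℝ := fun i => min (w i) (w b) / v i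
  have hvp (i : Fin n) : v i * p i = min (w i) (w b) := mul_div_cancel₀ _ (hpos i).ne'
  have hp_anti : Antitone fun i => v i * p i := fun i j hij => by
    simp only [hvp]
    exact min_le_min_right _ (hw_anti hij)
  refine ⟨p, ⟨fun i => ⟨?_, ?_⟩, ?_⟩, ?_, fun k l hk hl => ?_, hp_anti⟩
  · exact div_nonneg (le_min (hw_nonneg i) (hw_nonneg b)) (hpos i).le
  · exact (div_le_one (hpos i)).2 ((min_le_left _ _).trans (hw_le i))
  · calc ∑ i, p i ≤ ∑ i, w i / v i :=
          sum_le_sum fun i _ => div_le_div_of_nonneg_right (min_le_left _ _) (hpos i).le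
      _ ≤ ∑ i, v i * q i / v i := sum_comp_perm_div_le_of_antitone hv hpos hσ
      _ = ∑ i, q i := sum_congr rfl fun i _ => mul_div_cancel_left₀ _ (hpos i).ne'
      _ ≤ ℓ := hq.2
  · rw [← val_comp_perm σ v q, val_eq_sum_Ici_of_antitone ht hp_anti,
      val_eq_sum_Ici_of_antitone (v := v ∘ σ) (p := q ∘ σ) ht hσ]
    exact sum_congr rfl fun i hi => (hvp i).trans (min_eq_left (hw_anti (mem_Ici.1 hi)))
  · rw [hvp, hvp, min_eq_right (hw_anti (show k ≤ b from hk)),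
      min_eq_right (hw_anti (show l ≤ b from hl))]

end PseudoDistributions

theorem stmt_14_general (n t ℓ : ℕ) (v : Fin n → ℝ)
    (hmono : ∀ i j : Fin n, i ≤ j → v j ≤ v i) (hpos : ∀ i, 0 < v i)
    (ht : t < n) :
    ∃ p : Fin n → ℝ, (∀ i, 0 ≤ p i ∧ p i ≤ 1) ∧ (∑ i, p i) ≤ ℓ ∧
      (∀ q : Fin n → ℝ, (∀ i, 0 ≤ q i ∧ q i ≤ 1) → (∑ i, q i) ≤ ℓ →
        val n t v q ≤ val n t v p) ∧
      (∀ k l : Fin n, (k : ℕ) ≤ t → (l : ℕ) ≤ t → v k * p k = v l * p l) ∧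
      (∀ i j : Fin n, i ≤ j → v j * p j ≤ v i * p i) := by
  obtain ⟨q, hq, hq_max⟩ := isCompact_pseudoDistributions.exists_isMaxOn
    ⟨0, zero_mem_pseudoDistributions (Nat.cast_nonneg ℓ)⟩ (continuous_val ht.le v).continuousOn
  obtain ⟨p, ⟨hp_box, hp_sum⟩, hp_val, hp_eq, hp_anti⟩ :=
    exists_flat_val_eq ht (fun i j hij => hmono i j hij) hpos hq
  exact ⟨p, hp_box, hp_sum, fun q' hq'_box hq'_sum => hp_val ▸ hq_max ⟨hq'_box, hq'_sum⟩,
    hp_eq, fun i j hij => hp_anti hij⟩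

/-- There exists a pseudo-distribution `p ∈ Δ_{≤ℓ}([n])` maximizing `val p`
with `v 1 p 1 = ⋯ = v (t+1) p (t+1) ≥ v (t+2) p (t+2) ≥ ⋯ ≥ v n p n`. -/
theorem stmt_14 (n t ℓ : ℕ) (v : Fin n → ℝ)
    (hmono : ∀ i j : Fin n, i ≤ j → v j ≤ v i) (hpos : ∀ i, 0 < v i)
    (ht1 : 1 ≤ t) (ht : t < n) (hℓ1 : 1 ≤ ℓ) (hℓ : ℓ < n) :
    ∃ p : Fin n → ℝ, (∀ i, 0 ≤ p i ∧ p i ≤ 1) ∧ (∑ i, p i) ≤ ℓ ∧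
      (∀ q : Fin n → ℝ, (∀ i, 0 ≤ q i ∧ q i ≤ 1) → (∑ i, q i) ≤ ℓ →
        val n t v q ≤ val n t v p) ∧
      (∀ k l : Fin n, (k : ℕ) ≤ t → (l : ℕ) ≤ t → v k * p k = v l * p l) ∧
      (∀ i j : Fin n, i ≤ j → v j * p j ≤ v i * p i) :=
  stmt_14_general n t ℓ v hmono hpos ht
end
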